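/- arXiv:2604.01499 — 2 statements merged into one kernel-verified Lean document; each statement's English description precedes it below -/
import Mathlib

section
/- Let ε be a random vector in ℝ^d with i.i.d. standard Gaussian coordinates and let ξ be a standard Gaussian real random variable independent of ε. Fix v ∈ ℝ^d, σ > 0, σ_ξ ≥ 0, and set σ_R² := σ²‖v‖² + σ_ξ² with σ_R > 0. Define R̃ := −σ (v·ε) + σ_ξ ξ. Then the covariance matrix of the random vector R̃ ε equals σ_R² I_d + σ² v v^⊤. Consequently the single-step ES update Δθ := (α/(N σ_R)) Σ_{i=1}^N R̃_i ε_i built from N i.i.d. copies has covariance Cov[Δθ] = (α²/N) I_d + (α² σ² / (N σ_R²)) v v^⊤. -/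
/-!
Put `y = (ε, ξ)` together as one standard Gaussian vector indexed by `Option (Fin d)` and
`w = (-σ v, σ_ξ)`; then `R̃ = ⟪w, y⟫` and `R̃ ε_a = ⟪w, y⟫ y_a`. Gaussian integration by parts,
`E[y_j y^m] = m_j E[y^(m - e_j)]`, gives `E[y_a y_b] = δ_ab` and Isserlis' formula
`E[y_j y_k y_a y_b] = δ_jk δ_ab + δ_ja δ_kb + δ_jb δ_ka`, hence `E[⟪w, y⟫ y_a] = w_a` and
`E[⟪w, y⟫² y_a y_b] = ‖w‖² δ_ab + 2 w_a w_b`: the covariance of `R̃ y` is `‖w‖² I + w wᵀ`,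
whose `ε`-block is `σ_R² I + σ² v vᵀ`. The update is `α / (N σ_R)` times a sum of `N` i.i.d.
copies, so its covariance is `N (α / (N σ_R))²` times that of one copy.
-/

open MeasureTheory ProbabilityTheory Matrix
open scoped NNReal

section Sampling

variable {Ω E : Type*} [MeasurableSpace Ω] [MeasurableSpace E] {μ : Measure Ω} {ν : Measure E}

lemma integral_mul_sub_integral_mul_integral [IsProbabilityMeasure μ] {X Y : Ω → ℝ}
    (hX : MemLp X 2 μ) (hY : MemLp Y 2 μ) :
    ∫ ω, X ω * Y ω ∂μ - (∫ ω, X ω ∂μ) * ∫ ω, Y ω ∂μ = cov[X, Y; μ] :=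
  (covariance_eq_sub hX hY).symm

lemma ProbabilityTheory.HasLaw.memLp_fun_comp {X : Ω → E} (hX : HasLaw X ν μ) {f : E → ℝ}
    {p : ENNReal} (hf : MemLp f p ν) : MemLp (fun ω => f (X ω)) p μ := by
  rw [← hX.map_eq] at hf
  exact hf.comp_of_map hX.aemeasurable

lemma covariance_sum_comp_of_iIndepFun [IsProbabilityMeasure μ] {ι : Type*} [Fintype ι]
    {Y : ι → Ω → E} (hY : ∀ i, HasLaw (Y i) ν μ) (hindep : iIndepFun Y μ) {f g : E → ℝ}
    (hfm : Measurable f) (hgm : Measurable g) (hf : MemLp f 2 ν) (hg : MemLp g 2 ν) :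
    cov[fun ω => ∑ i, f (Y i ω), fun ω => ∑ i, g (Y i ω); μ]
      = Fintype.card ι * cov[f, g; ν] := by
  have hfY (i : ι) : MemLp (fun ω => f (Y i ω)) 2 μ := (hY i).memLp_fun_comp hf
  have hgY (i : ι) : MemLp (fun ω => g (Y i ω)) 2 μ := (hY i).memLp_fun_comp hg
  have hdiag (i : ι) : ∑ j, cov[fun ω => f (Y i ω), fun ω => g (Y j ω); μ] = cov[f, g; ν] := by
    rw [Finset.sum_eq_single i ?_ (fun hi => absurd (Finset.mem_univ i) hi)]
    · exact (hY i).covariance_fun_comp hfm.aemeasurable hgm.aemeasurable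
    · exact fun j _ hji =>
        ((hindep.indepFun hji.symm).comp hfm hgm).covariance_eq_zero (hfY i) (hgY j)
  rw [covariance_fun_sum_fun_sum hfY hgY]
  simp [hdiag]

lemma hasLaw_piOptionEquivProd_symm {ι : Type*} [Fintype ι] {ν : Measure ℝ} [SigmaFinite ν] :
    HasLaw (MeasurableEquiv.piOptionEquivProd fun _ : Option ι => ℝ).symm
      (Measure.pi fun _ => ν) ((Measure.pi fun _ => ν).prod ν) :=
  ⟨by fun_prop, Measure.pi_map_piOptionEquivProd fun _ => ν⟩

end Sampling

lemma integrable_pow_gaussianReal (μ : ℝ) (v : ℝ≥0) (n : ℕ) :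
    Integrable (fun x => x ^ n) (gaussianReal μ v) := by
  have := (memLp_id_gaussianReal (μ := μ) (v := v) n).integrable_norm_pow'
  exact (integrable_norm_iff (by fun_prop)).1 (by simpa [norm_pow] using this)

lemma integrable_gaussianReal_iff {μ : ℝ} {v : ℝ≥0} (hv : v ≠ 0) {f : ℝ → ℝ} :
    Integrable f (gaussianReal μ v) ↔ Integrable fun x => gaussianPDFReal μ v x * f x := by
  rw [gaussianReal_of_var_ne_zero _ hv, integrable_withDensity_iff_integrable_smul'
    (measurable_gaussianPDF μ v) (ae_of_all _ fun _ => gaussianPDF_lt_top)]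
  simp [toReal_gaussianPDF]

lemma hasDerivAt_gaussianPDFReal (μ : ℝ) {v : ℝ≥0} (hv : v ≠ 0) (x : ℝ) :
    HasDerivAt (gaussianPDFReal μ v) (-((x - μ) / v) * gaussianPDFReal μ v x) x := by
  have hexp : HasDerivAt (fun y => -(y - μ) ^ 2 / (2 * v)) (-((x - μ) / v)) x :=
    ((((hasDerivAt_id x).sub_const μ).pow 2).fun_neg.div_const (2 * (v : ℝ))).congr_deriv (by
      field_simp [show (v : ℝ) ≠ 0 by exact_mod_cast hv]
      norm_num)
  rw [gaussianPDFReal_def]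
  exact (hexp.exp.const_mul _).congr_deriv (by ring)

/-- Gaussian integration by parts; the truncated `n - 1` is harmless because the factor `n`
vanishes when `n = 0`. -/
lemma integral_pow_succ_gaussianReal (v : ℝ≥0) (n : ℕ) :
    ∫ x, x ^ (n + 1) ∂gaussianReal 0 v = n * v * ∫ x, x ^ (n - 1) ∂gaussianReal 0 v := by
  rcases n with _ | n
  · simp [integral_id_gaussianReal]
  by_cases hv : v = 0
  · simp [hv, gaussianReal_zero_var]
  have hint (k : ℕ) : Integrable fun x => gaussianPDFReal 0 v x * x ^ k :=
    (integrable_gaussianReal_iff hv).1 (integrable_pow_gaussianReal 0 v k)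
  have hibp := integral_mul_deriv_eq_deriv_mul_of_integrable
    (u := fun x => x ^ (n + 1)) (u' := fun x => (n + 1) * x ^ n)
    (fun x _ => by simpa using hasDerivAt_pow (n + 1) x)
    (fun x _ => hasDerivAt_gaussianPDFReal 0 hv x)
    (((hint (n + 2)).div_const (-v)).congr (ae_of_all _ fun x => by
      simp only [Pi.mul_apply]; field_simp; ring))
    (((hint n).const_mul (n + 1)).congr (ae_of_all _ fun x => by
      simp only [Pi.mul_apply]; ring))
    ((hint (n + 1)).congr (ae_of_all _ fun x => by simp only [Pi.mul_apply]; ring))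
  have hlhs : ∫ x, x ^ (n + 1) * (-((x - 0) / v) * gaussianPDFReal 0 v x)
      = -(v : ℝ)⁻¹ * ∫ x, gaussianPDFReal 0 v x * x ^ (n + 1 + 1) := by
    rw [← integral_const_mul]; congr 1; ext x; ring
  have hrhs : ∫ x, (n + 1) * x ^ n * gaussianPDFReal 0 v x
      = (n + 1) * ∫ x, gaussianPDFReal 0 v x * x ^ n := by
    rw [← integral_const_mul]; congr 1; ext x; ring
  rw [hlhs, hrhs] at hibp
  rw [integral_gaussianReal_eq_integral_smul hv, integral_gaussianReal_eq_integral_smul hv]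
  simp only [smul_eq_mul, Nat.add_sub_cancel, Nat.cast_add_one]
  field_simp [show (v : ℝ) ≠ 0 by exact_mod_cast hv] at hibp
  linear_combination -hibp

section StdGaussianPi

variable {ι : Type*} [Fintype ι]

local notation "γ" => Measure.pi fun _ : ι => gaussianReal 0 1

lemma integrable_prod_pow (m : ι → ℕ) : Integrable (fun x => ∏ i, x i ^ m i) γ :=
  Integrable.fintype_prod (f := fun i t => t ^ m i) fun i => integrable_pow_gaussianReal 0 1 (m i)

lemma integral_prod_pow (m : ι → ℕ) :
    ∫ x, ∏ i, x i ^ m i ∂γ = ∏ i, ∫ t, t ^ m i ∂gaussianReal 0 1 :=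
  integral_fintype_prod_eq_prod fun i t => t ^ m i

lemma sum_mul_eval_mul_sum_mul_eval (w x : ι → ℝ) (a b : ι) :
    (∑ j, w j * x j) * x a * ((∑ j, w j * x j) * x b)
      = ∑ j, ∑ k, w j * w k * (x j * (x k * (x a * x b))) := by
  rw [show (∑ j, w j * x j) * x a * ((∑ j, w j * x j) * x b)
      = (∑ j, w j * x j) * (∑ k, w k * x k) * (x a * x b) by ring,
    Finset.sum_mul_sum, Finset.sum_mul]
  refine Finset.sum_congr rfl fun j _ => ?_
  rw [Finset.sum_mul]
  exact Finset.sum_congr rfl fun k _ => by ring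

variable [DecidableEq ι]

lemma prod_pow_single (x : ι → ℝ) (j : ι) : ∏ i, x i ^ (Pi.single j 1 : ι → ℕ) i = x j := by
  simp [Pi.single_apply, pow_ite]

lemma mul_prod_pow (x : ι → ℝ) (j : ι) (m : ι → ℕ) :
    x j * ∏ i, x i ^ m i = ∏ i, x i ^ (Pi.single j 1 + m : ι → ℕ) i := by
  simp only [Pi.add_apply, pow_add, Finset.prod_mul_distrib, prod_pow_single]

lemma integral_mul_prod_pow (j : ι) (m : ι → ℕ) :
    ∫ x, x j * ∏ i, x i ^ m i ∂γ = m j * ∫ x, ∏ i, x i ^ (m - Pi.single j 1 : ι → ℕ) i ∂γ := by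
  simp_rw [mul_prod_pow]
  rw [integral_prod_pow, integral_prod_pow, ← Finset.mul_prod_erase _ _ (Finset.mem_univ j),
    ← Finset.mul_prod_erase _ _ (Finset.mem_univ j), ← mul_assoc]
  congr 1
  · simpa [add_comm 1] using integral_pow_succ_gaussianReal 1 (m j)
  · refine Finset.prod_congr rfl fun i hi => ?_
    simp [Pi.single_eq_of_ne (Finset.ne_of_mem_erase hi)]

lemma integral_eval_mul_eval (a b : ι) : ∫ x, x a * x b ∂γ = if a = b then 1 else 0 := by
  simp_rw [← prod_pow_single _ b, integral_mul_prod_pow]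
  by_cases h : a = b
  · subst h
    simp
  · simp [h]

lemma integral_prod_pow_single_add_single (a b : ι) :
    ∫ x, ∏ i, x i ^ (Pi.single a 1 + Pi.single b 1 : ι → ℕ) i ∂γ = if a = b then 1 else 0 := by
  simp_rw [← mul_prod_pow, prod_pow_single, integral_eval_mul_eval]

lemma single_apply_mul_integral_prod_pow (j k : ι) (n : ι → ℕ) :
    ((Pi.single k 1 : ι → ℕ) j : ℝ)
        * ∫ x, ∏ i, x i ^ (Pi.single k 1 + n - Pi.single j 1 : ι → ℕ) i ∂γ
      = if j = k then ∫ x, ∏ i, x i ^ n i ∂γ else 0 := by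
  by_cases h : j = k
  · subst h
    simp
  · simp [h]

lemma integral_eval_mul_eval_mul_eval_mul_eval (j k a b : ι) :
    ∫ x, x j * (x k * (x a * x b)) ∂γ
      = (if j = k then 1 else 0) * (if a = b then 1 else 0)
        + (if j = a then 1 else 0) * (if k = b then 1 else 0)
        + (if j = b then 1 else 0) * (if k = a then 1 else 0) := by
  have hk := single_apply_mul_integral_prod_pow j k (Pi.single a 1 + Pi.single b 1)
  have ha := single_apply_mul_integral_prod_pow j a (Pi.single k 1 + Pi.single b 1)
  have hb := single_apply_mul_integral_prod_pow j b (Pi.single k 1 + Pi.single a 1)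
  rw [add_left_comm] at ha
  rw [add_left_comm, add_comm (Pi.single b 1)] at hb
  simp only [integral_prod_pow_single_add_single] at hk ha hb
  have hm (x : ι → ℝ) : x k * (x a * x b)
      = ∏ i, x i ^ (Pi.single k 1 + (Pi.single a 1 + Pi.single b 1) : ι → ℕ) i := by
    rw [← prod_pow_single x b, mul_prod_pow, mul_prod_pow]
  simp_rw [hm, integral_mul_prod_pow, Pi.add_apply, Nat.cast_add, add_mul]
  rw [hk, ha, hb]
  simp only [ite_mul, one_mul, zero_mul, add_assoc]

variable (w : ι → ℝ)

lemma integrable_sum_mul_eval_mul_sum_mul_eval (a b : ι) :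
    Integrable (fun x => (∑ j, w j * x j) * x a * ((∑ j, w j * x j) * x b)) γ := by
  simp_rw [sum_mul_eval_mul_sum_mul_eval, ← prod_pow_single _ b, mul_prod_pow]
  exact integrable_finsetSum _ fun j _ => integrable_finsetSum _ fun k _ =>
    (integrable_prod_pow _).const_mul _

lemma memLp_sum_mul_eval (a : ι) : MemLp (fun x => (∑ j, w j * x j) * x a) 2 γ := by
  rw [memLp_two_iff_integrable_sq (by fun_prop)]
  simpa only [sq] using integrable_sum_mul_eval_mul_sum_mul_eval w a a

lemma integral_sum_mul_eval (a : ι) : ∫ x, (∑ j, w j * x j) * x a ∂γ = w a := by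
  have hint (j : ι) : Integrable (fun x => w j * (x j * x a)) γ := by
    simp_rw [← prod_pow_single _ a, mul_prod_pow]
    exact (integrable_prod_pow _).const_mul _
  simp_rw [Finset.sum_mul, mul_assoc]
  rw [integral_finsetSum _ fun j _ => hint j]
  simp [integral_const_mul, integral_eval_mul_eval]

lemma integral_sum_mul_eval_mul_sum_mul_eval (a b : ι) :
    ∫ x, (∑ j, w j * x j) * x a * ((∑ j, w j * x j) * x b) ∂γ
      = (∑ j, w j ^ 2) * (if a = b then 1 else 0) + 2 * (w a * w b) := by
  have hint (j k : ι) : Integrable (fun x => w j * w k * (x j * (x k * (x a * x b)))) γ := by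
    simp_rw [← prod_pow_single _ b, mul_prod_pow]
    exact (integrable_prod_pow _).const_mul _
  simp_rw [sum_mul_eval_mul_sum_mul_eval]
  rw [integral_finsetSum _ fun j _ => integrable_finsetSum _ fun k _ => hint j k]
  simp_rw [integral_finsetSum _ fun k _ => hint _ k, integral_const_mul,
    integral_eval_mul_eval_mul_eval_mul_eval]
  simp only [mul_add, Finset.sum_add_distrib, mul_ite, mul_one, mul_zero,
    Finset.sum_ite_eq', Finset.mem_univ, if_true]
  split_ifs <;> simp [sq] <;> ring

lemma covariance_sum_mul_eval (a b : ι) :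
    cov[fun x => (∑ j, w j * x j) * x a, fun x => (∑ j, w j * x j) * x b; γ]
      = (∑ j, w j ^ 2) * (if a = b then 1 else 0) + w a * w b := by
  rw [covariance_eq_sub (memLp_sum_mul_eval w a) (memLp_sum_mul_eval w b)]
  simp only [Pi.mul_apply, integral_sum_mul_eval_mul_sum_mul_eval, integral_sum_mul_eval]
  ring

end StdGaussianPi

section Reward

variable {ι : Type*} [Fintype ι] (v : ι → ℝ) (σ σξ : ℝ)

local notation "γ" => Measure.pi fun _ : ι => gaussianReal 0 1

/-- `R̃ ε_a` as a function of the noise pair `(ε, ξ)`. -/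
def rewardMulPerturbation (a : ι) (p : (ι → ℝ) × ℝ) : ℝ :=
  (-σ * ∑ j, v j * p.1 j + σξ * p.2) * p.1 a

@[fun_prop]
lemma measurable_rewardMulPerturbation (a : ι) :
    Measurable (rewardMulPerturbation v σ σξ a) := by
  unfold rewardMulPerturbation
  fun_prop

lemma rewardMulPerturbation_eq_comp (a : ι) :
    rewardMulPerturbation v σ σξ a
      = (fun y => (∑ o, o.elim σξ (fun j => -σ * v j) * y o) * y (some a))
        ∘ (MeasurableEquiv.piOptionEquivProd fun _ : Option ι => ℝ).symm := by
  ext p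
  simp only [rewardMulPerturbation, Function.comp_apply, Fintype.sum_option, Option.elim_none,
    Option.elim_some]
  change _ = (σξ * p.2 + ∑ j, -σ * v j * p.1 j) * p.1 a
  simp only [Finset.mul_sum, mul_assoc]
  ring

variable [DecidableEq ι]

lemma memLp_rewardMulPerturbation (a : ι) :
    MemLp (rewardMulPerturbation v σ σξ a) 2 ((γ).prod (gaussianReal 0 1)) := by
  rw [rewardMulPerturbation_eq_comp]
  exact hasLaw_piOptionEquivProd_symm.memLp_fun_comp (memLp_sum_mul_eval _ _)

lemma covariance_rewardMulPerturbation (a b : ι) :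
    cov[rewardMulPerturbation v σ σξ a, rewardMulPerturbation v σ σξ b; (γ).prod (gaussianReal 0 1)]
      = (σ ^ 2 * ∑ j, v j ^ 2 + σξ ^ 2) * (if a = b then 1 else 0) + σ ^ 2 * (v a * v b) := by
  rw [rewardMulPerturbation_eq_comp, rewardMulPerturbation_eq_comp,
    hasLaw_piOptionEquivProd_symm.covariance_comp (by fun_prop) (by fun_prop),
    covariance_sum_mul_eval]
  simp only [Fintype.sum_option, Option.elim_none, Option.elim_some, mul_pow, ← Finset.mul_sum,
    Option.some_inj]
  ring

end Reward

theorem es_linear_landscape_update_covariance_general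
    {Ω : Type*} [MeasurableSpace Ω] (μ : Measure Ω) [IsProbabilityMeasure μ]
    (d N : ℕ) (hN : 0 < N) (v : Fin d → ℝ) (α σ σξ σR : ℝ)
    (hσR2 : σR ^ 2 = σ ^ 2 * (∑ j, v j ^ 2) + σξ ^ 2) (hσRpos : 0 < σR)
    (ε : Fin N → Ω → (Fin d → ℝ)) (ξ : Fin N → Ω → ℝ)
    (hεmeas : ∀ i, Measurable (ε i)) (hξmeas : ∀ i, Measurable (ξ i))
    (hεdist : ∀ i, Measure.map (ε i) μ = Measure.pi (fun _ : Fin d => gaussianReal 0 1))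
    (hξdist : ∀ i, Measure.map (ξ i) μ = gaussianReal 0 1)
    (hpairindep : ∀ i, IndepFun (ε i) (ξ i) μ)
    (hiid : iIndepFun (fun i ω => (ε i ω, ξ i ω)) μ)
    (Rtilde : Fin N → Ω → ℝ)
    (hRtilde : ∀ i ω, Rtilde i ω = -σ * (∑ j, v j * ε i ω j) + σξ * ξ i ω)
    (Δθ : Ω → (Fin d → ℝ))
    (hΔθ : ∀ ω j, Δθ ω j = (α / (N * σR)) * ∑ i, Rtilde i ω * ε i ω j) :
    (∀ i, (Matrix.of fun a b : Fin d =>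
        (∫ ω, (Rtilde i ω * ε i ω a) * (Rtilde i ω * ε i ω b) ∂μ)
          - (∫ ω, Rtilde i ω * ε i ω a ∂μ) * (∫ ω, Rtilde i ω * ε i ω b ∂μ))
      = σR ^ 2 • (1 : Matrix (Fin d) (Fin d) ℝ) + σ ^ 2 • Matrix.vecMulVec v v) ∧
    ((Matrix.of fun a b : Fin d =>
        (∫ ω, Δθ ω a * Δθ ω b ∂μ) - (∫ ω, Δθ ω a ∂μ) * (∫ ω, Δθ ω b ∂μ))
      = (α ^ 2 / N) • (1 : Matrix (Fin d) (Fin d) ℝ)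
        + (α ^ 2 * σ ^ 2 / (N * σR ^ 2)) • Matrix.vecMulVec v v) := by
  have hlaw (i : Fin N) : HasLaw (fun ω => (ε i ω, ξ i ω))
      ((Measure.pi fun _ => gaussianReal 0 1).prod (gaussianReal 0 1)) μ :=
    (hpairindep i).hasLaw_prod ⟨(hεmeas i).aemeasurable, hεdist i⟩
      ⟨(hξmeas i).aemeasurable, hξdist i⟩
  have hRε (i : Fin N) (ω : Ω) (a : Fin d) :
      Rtilde i ω * ε i ω a = rewardMulPerturbation v σ σξ a (ε i ω, ξ i ω) := by
    rw [hRtilde]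
    rfl
  have hmem (i : Fin N) (a : Fin d) :
      MemLp (fun ω => rewardMulPerturbation v σ σξ a (ε i ω, ξ i ω)) 2 μ :=
    (hlaw i).memLp_fun_comp (memLp_rewardMulPerturbation v σ σξ a)
  have hN' : (N : ℝ) ≠ 0 := by positivity
  simp_rw [hΔθ, hRε]
  refine ⟨fun i => ?_, ?_⟩ <;> ext a b
  · rw [of_apply, integral_mul_sub_integral_mul_integral (hmem i a) (hmem i b),
      (hlaw i).covariance_fun_comp (by fun_prop) (by fun_prop), covariance_rewardMulPerturbation,
      ← hσR2]
    simp [one_apply, vecMulVec_apply]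
  · rw [of_apply, integral_mul_sub_integral_mul_integral
      ((memLp_finsetSum _ fun i _ => hmem i a).const_mul _)
      ((memLp_finsetSum _ fun i _ => hmem i b).const_mul _),
      covariance_const_mul_left, covariance_const_mul_right,
      covariance_sum_comp_of_iIndepFun hlaw hiid (by fun_prop) (by fun_prop)
        (memLp_rewardMulPerturbation v σ σξ a) (memLp_rewardMulPerturbation v σ σξ b),
      covariance_rewardMulPerturbation, ← hσR2]
    simp only [Matrix.add_apply, Matrix.smul_apply, one_apply, vecMulVec_apply, smul_eq_mul,
      Fintype.card_fin]
    split_ifs <;> field_simp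

/-- **Covariance of the ES update on a linear landscape.**
With `ε i` i.i.d. standard Gaussian vectors in `ℝ^d`, `ξ i` i.i.d. standard Gaussian
scalars independent of the corresponding `ε i` (the pairs `(ε i, ξ i)` being jointly
i.i.d.), centered rewards `R̃ i = −σ (v·ε i) + σ_ξ ξ i`, and `σ_R² = σ²‖v‖² + σ_ξ²`,
the covariance of each `R̃ i • ε i` equals `σ_R² I_d + σ² v v^⊤`, and the ES update
`Δθ = (α/(N σ_R)) ∑ i, R̃ i • ε i` has covariance
`(α²/N) I_d + (α² σ²/(N σ_R²)) v v^⊤`. -/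
theorem es_linear_landscape_update_covariance
    {Ω : Type*} [MeasurableSpace Ω] (μ : Measure Ω) [IsProbabilityMeasure μ]
    (d N : ℕ) (hN : 0 < N) (v : Fin d → ℝ) (α σ σξ σR : ℝ)
    (hα : 0 < α) (hσ : 0 < σ) (hσξ : 0 ≤ σξ)
    (hσR2 : σR ^ 2 = σ ^ 2 * (∑ j, v j ^ 2) + σξ ^ 2) (hσRpos : 0 < σR)
    (ε : Fin N → Ω → (Fin d → ℝ)) (ξ : Fin N → Ω → ℝ)
    (hεmeas : ∀ i, Measurable (ε i)) (hξmeas : ∀ i, Measurable (ξ i))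
    (hεdist : ∀ i, Measure.map (ε i) μ = Measure.pi (fun _ : Fin d => gaussianReal 0 1))
    (hξdist : ∀ i, Measure.map (ξ i) μ = gaussianReal 0 1)
    (hpairindep : ∀ i, IndepFun (ε i) (ξ i) μ)
    (hiid : iIndepFun (fun i ω => (ε i ω, ξ i ω)) μ)
    (Rtilde : Fin N → Ω → ℝ)
    (hRtilde : ∀ i ω, Rtilde i ω = -σ * (∑ j, v j * ε i ω j) + σξ * ξ i ω)
    (Δθ : Ω → (Fin d → ℝ))
    (hΔθ : ∀ ω j, Δθ ω j = (α / (N * σR)) * ∑ i, Rtilde i ω * ε i ω j) :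
    (∀ i, (Matrix.of fun a b : Fin d =>
        (∫ ω, (Rtilde i ω * ε i ω a) * (Rtilde i ω * ε i ω b) ∂μ)
          - (∫ ω, Rtilde i ω * ε i ω a ∂μ) * (∫ ω, Rtilde i ω * ε i ω b ∂μ))
      = σR ^ 2 • (1 : Matrix (Fin d) (Fin d) ℝ) + σ ^ 2 • Matrix.vecMulVec v v) ∧
    ((Matrix.of fun a b : Fin d =>
        (∫ ω, Δθ ω a * Δθ ω b ∂μ) - (∫ ω, Δθ ω a ∂μ) * (∫ ω, Δθ ω b ∂μ))
      = (α ^ 2 / N) • (1 : Matrix (Fin d) (Fin d) ℝ)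
        + (α ^ 2 * σ ^ 2 / (N * σR ^ 2)) • Matrix.vecMulVec v v) :=
  es_linear_landscape_update_covariance_general μ d N hN v α σ σξ σR hσR2 hσRpos ε ξ hεmeas hξmeas
    hεdist hξdist hpairindep hiid Rtilde hRtilde Δθ hΔθ
end

section
/- Let ε be a random vector in ℝ^d with i.i.d. standard Gaussian coordinates, ξ a standard Gaussian real random variable independent of ε, Q a symmetric d×d real matrix, θ_0 ∈ ℝ^d, v := Q θ_0, and R̃ := −σ (v·ε) − (σ²/2)(ε^⊤ Q ε − Tr Q) + σ_ξ ξ. Then E[R̃ ε] = −σ v. Consequently, with σ_R := √(σ²‖v‖² + (σ⁴/2) Tr(Q²) + σ_ξ²) > 0 and step size α > 0, the mean single-step ES update E[Δθ] = (α/σ_R) E[R̃ ε] equals −(α σ / σ_R) v, i.e. it is aligned with the negative gradient direction scaled by the signal-to-noise ratio. -/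
/-!
Multiply the centred reward by `εⱼ` and take expectations term by term. The linear part gives
`-σ ∑ₖ vₖ E[εₖ εⱼ] = -σ vⱼ`, the coordinates being uncorrelated with unit variance. The quadratic
part times `εⱼ` is an odd function of `ε`, and the standard Gaussian law on `ℝ^d` is invariant
under `x ↦ -x`, so it integrates to zero. The noise part vanishes by independence, as `E[ξ] = 0`.
Every term is integrable because Gaussian coordinates have moments of all orders.
-/

open MeasureTheory ProbabilityTheory Matrix
open scoped NNReal ENNReal

instance isNegInvariant_gaussianReal (v : ℝ≥0) : (gaussianReal 0 v).IsNegInvariant :=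
  ⟨by rw [Measure.neg_def, gaussianReal_map_neg, neg_zero]⟩

theorem integral_eq_zero_of_odd {G : Type*} [AddGroup G] [MeasurableSpace G] [MeasurableNeg G]
    {μ : Measure G} [μ.IsNegInvariant] {f : G → ℝ} (hf : Function.Odd f) :
    ∫ x, f x ∂μ = 0 := by
  have h := integral_neg_eq_self f μ
  rw [show (fun x => f (-x)) = fun x => -f x from funext hf, integral_neg] at h
  linarith

theorem ProbabilityTheory.HasLaw.integrable_comp {Ω 𝓧 : Type*} {mΩ : MeasurableSpace Ω}
    {m𝓧 : MeasurableSpace 𝓧} {μ : Measure Ω} {P : Measure 𝓧} {X : Ω → 𝓧} (hX : HasLaw X P μ)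
    {f : 𝓧 → ℝ} (hf : Integrable f P) : Integrable (fun ω => f (X ω)) μ :=
  (hX.map_eq ▸ hf).comp_aemeasurable hX.aemeasurable

noncomputable abbrev stdGaussianPi (ι : Type*) [Fintype ι] : Measure (ι → ℝ) :=
  Measure.pi fun _ => gaussianReal 0 1

section StdGaussianPi

variable {ι : Type*} [Fintype ι]

theorem memLp_eval_stdGaussianPi (i : ι) {p : ℝ≥0∞} (hp : p ≠ ∞) :
    MemLp (fun x => x i) p (stdGaussianPi ι) :=
  (memLp_id_gaussianReal' p hp).comp_measurePreserving (measurePreserving_eval _ i)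

theorem integrable_eval_stdGaussianPi (i : ι) : Integrable (fun x => x i) (stdGaussianPi ι) :=
  memLp_one_iff_integrable.1 (memLp_eval_stdGaussianPi i (by simp))

theorem integrable_eval_mul_eval_stdGaussianPi (i j : ι) :
    Integrable (fun x => x i * x j) (stdGaussianPi ι) :=
  (memLp_eval_stdGaussianPi (p := 2) i (by simp)).integrable_mul
    (memLp_eval_stdGaussianPi (p := 2) j (by simp))

theorem integrable_eval_mul_eval_mul_eval_stdGaussianPi (i j k : ι) :
    Integrable (fun x => x i * x j * x k) (stdGaussianPi ι) := by
  have : ENNReal.HolderTriple 4 4 2 := by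
    refine ⟨?_⟩
    rw [show (4 : ℝ≥0∞) = 2 * 2 by norm_num, ENNReal.mul_inv (by simp) (by simp), ← mul_add,
      ENNReal.inv_two_add_inv_two, mul_one]
  exact ((memLp_eval_stdGaussianPi (p := 4) j (by simp)).mul' (r := 2)
    (memLp_eval_stdGaussianPi (p := 4) i (by simp))).integrable_mul
    (memLp_eval_stdGaussianPi (p := 2) k (by simp))

theorem integral_eval_mul_eval_stdGaussianPi [DecidableEq ι] (i j : ι) :
    ∫ x, x i * x j ∂(stdGaussianPi ι) = if i = j then 1 else 0 := by
  split_ifs with hij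
  · subst hij
    simp_rw [← sq]
    rw [integral_comp_eval (f := fun t => t ^ 2) (by fun_prop),
      ← variance_of_integral_eq_zero aemeasurable_id' integral_id_gaussianReal,
      variance_fun_id_gaussianReal, NNReal.coe_one]
  · have hindep : iIndepFun (fun i (x : ι → ℝ) => x i) (stdGaussianPi ι) :=
      iIndepFun_pi (X := fun _ t => t) fun _ => aemeasurable_id'
    rw [← Pi.mul_def, (hindep.indepFun hij).integral_mul_eq_mul_integral
      (continuous_apply i).aestronglyMeasurable (continuous_apply j).aestronglyMeasurable]
    simp [integral_eval, integral_id_gaussianReal]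

theorem integrable_dotProduct_mul_eval_stdGaussianPi (v : ι → ℝ) (j : ι) :
    Integrable (fun x => (∑ k, v k * x k) * x j) (stdGaussianPi ι) := by
  simp_rw [Finset.sum_mul, mul_assoc]
  exact integrable_finsetSum _ fun k _ => (integrable_eval_mul_eval_stdGaussianPi k j).const_mul _

theorem integral_dotProduct_mul_eval_stdGaussianPi (v : ι → ℝ) (j : ι) :
    ∫ x, (∑ k, v k * x k) * x j ∂(stdGaussianPi ι) = v j := by
  classical
  simp_rw [Finset.sum_mul, mul_assoc]
  rw [integral_finsetSum _ fun k _ => (integrable_eval_mul_eval_stdGaussianPi k j).const_mul _]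
  simp [integral_const_mul, integral_eval_mul_eval_stdGaussianPi]

theorem integrable_quadraticForm_mul_eval_stdGaussianPi (Q : Matrix ι ι ℝ) (j : ι) :
    Integrable (fun x => (∑ a, ∑ b, Q a b * x a * x b) * x j) (stdGaussianPi ι) := by
  simp_rw [Finset.sum_mul, mul_assoc]
  exact integrable_finsetSum _ fun a _ => integrable_finsetSum _ fun b _ =>
    ((integrable_eval_mul_eval_mul_eval_stdGaussianPi a b j).const_mul (Q a b)).congr
      (ae_of_all _ fun x => by simp only; ring)

theorem integrable_quadraticForm_sub_trace_mul_eval_stdGaussianPi (Q : Matrix ι ι ℝ) (j : ι) :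
    Integrable (fun x => ((∑ a, ∑ b, Q a b * x a * x b) - trace Q) * x j) (stdGaussianPi ι) := by
  simp_rw [sub_mul]
  exact (integrable_quadraticForm_mul_eval_stdGaussianPi Q j).sub
    ((integrable_eval_stdGaussianPi j).const_mul _)

end StdGaussianPi

-- `R(θ₀ + σx) - E[R(θ₀ + σε)]` for `R(θ) = -θᵀQθ/2` with `Q` symmetric and `v = Qθ₀`.
noncomputable def centeredQuadraticReward {ι : Type*} [Fintype ι] (σ : ℝ) (v : ι → ℝ)
    (Q : Matrix ι ι ℝ) (x : ι → ℝ) : ℝ :=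
  -σ * (∑ j, v j * x j) - σ ^ 2 / 2 * ((∑ a, ∑ b, Q a b * x a * x b) - trace Q)

section CenteredQuadraticReward

variable {ι : Type*} [Fintype ι] (σ : ℝ) (v : ι → ℝ) (Q : Matrix ι ι ℝ) (j : ι)

theorem centeredQuadraticReward_mul_eval (x : ι → ℝ) :
    centeredQuadraticReward σ v Q x * x j = -σ * ((∑ k, v k * x k) * x j)
      - σ ^ 2 / 2 * (((∑ a, ∑ b, Q a b * x a * x b) - trace Q) * x j) := by
  rw [centeredQuadraticReward]; ring

theorem integrable_centeredQuadraticReward_mul_eval :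
    Integrable (fun x => centeredQuadraticReward σ v Q x * x j) (stdGaussianPi ι) := by
  simp_rw [centeredQuadraticReward_mul_eval]
  exact (integrable_dotProduct_mul_eval_stdGaussianPi v j).const_mul _ |>.sub
    ((integrable_quadraticForm_sub_trace_mul_eval_stdGaussianPi Q j).const_mul _)

theorem integral_centeredQuadraticReward_mul_eval :
    ∫ x, centeredQuadraticReward σ v Q x * x j ∂(stdGaussianPi ι) = -σ * v j := by
  have hodd : ∫ x, ((∑ a, ∑ b, Q a b * x a * x b) - trace Q) * x j ∂(stdGaussianPi ι) = 0 :=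
    integral_eq_zero_of_odd fun x => by simp only [Pi.neg_apply, neg_mul, mul_neg, neg_neg]
  simp_rw [centeredQuadraticReward_mul_eval]
  rw [integral_sub ((integrable_dotProduct_mul_eval_stdGaussianPi v j).const_mul _)
      ((integrable_quadraticForm_sub_trace_mul_eval_stdGaussianPi Q j).const_mul _),
    integral_const_mul, integral_const_mul, integral_dotProduct_mul_eval_stdGaussianPi, hodd,
    mul_zero, sub_zero]

theorem integral_centeredQuadraticReward_add_noise_mul_eval {Ω : Type*} [MeasurableSpace Ω]
    {μ : Measure Ω} [IsProbabilityMeasure μ] {ε : Ω → ι → ℝ} {ξ : Ω → ℝ}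
    (hε : HasLaw ε (stdGaussianPi ι) μ) (hξ : HasLaw ξ (gaussianReal 0 1) μ)
    (hindep : IndepFun ε ξ μ) (σξ : ℝ) :
    ∫ ω, (centeredQuadraticReward σ v Q (ε ω) + σξ * ξ ω) * ε ω j ∂μ = -σ * v j := by
  have hεj : Integrable (fun ω => ε ω j) μ := hε.integrable_comp (integrable_eval_stdGaussianPi j)
  have hξint : Integrable ξ μ :=
    hξ.integrable_comp (f := id) (memLp_one_iff_integrable.1 (memLp_id_gaussianReal' 1 (by simp)))
  have hindepj : IndepFun (fun ω => ε ω j) ξ μ := hindep.comp (measurable_pi_apply j) measurable_id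
  have hsignal : ∫ ω, centeredQuadraticReward σ v Q (ε ω) * ε ω j ∂μ = -σ * v j :=
    (hε.integral_comp (integrable_centeredQuadraticReward_mul_eval σ v Q j).1).trans
      (integral_centeredQuadraticReward_mul_eval σ v Q j)
  have hnoise : ∫ ω, ε ω j * ξ ω ∂μ = 0 := by
    rw [← Pi.mul_def, hindepj.integral_mul_eq_mul_integral hεj.1 hξint.1, hξ.integral_eq,
      integral_id_gaussianReal, mul_zero]
  have hnoise_int : Integrable (fun ω => ε ω j * ξ ω) μ := hindepj.integrable_mul hεj hξint
  simp_rw [add_mul, mul_assoc, mul_comm (ξ _)]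
  rw [integral_add (hε.integrable_comp (integrable_centeredQuadraticReward_mul_eval σ v Q j))
    (hnoise_int.const_mul σξ), hsignal, integral_const_mul, hnoise, mul_zero, add_zero]

end CenteredQuadraticReward

theorem es_quadratic_landscape_mean_update_general
    {Ω : Type*} [MeasurableSpace Ω] (μ : Measure Ω) [IsProbabilityMeasure μ]
    (d : ℕ) (Q : Matrix (Fin d) (Fin d) ℝ)
    (v : Fin d → ℝ)
    (α σ σξ σR : ℝ)
    (ε : Ω → (Fin d → ℝ)) (ξ : Ω → ℝ)
    (hεmeas : Measurable ε) (hξmeas : Measurable ξ)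
    (hεdist : Measure.map ε μ = Measure.pi (fun _ : Fin d => gaussianReal 0 1))
    (hξdist : Measure.map ξ μ = gaussianReal 0 1)
    (hindep : IndepFun ε ξ μ)
    (Rtilde : Ω → ℝ)
    (hRtilde : ∀ ω, Rtilde ω = -σ * (∑ j, v j * ε ω j)
        - σ ^ 2 / 2 * ((∑ a, ∑ b, Q a b * ε ω a * ε ω b) - Matrix.trace Q)
        + σξ * ξ ω) :
    (∀ j, ∫ ω, Rtilde ω * ε ω j ∂μ = -σ * v j) ∧
    (∀ j, (α / σR) * ∫ ω, Rtilde ω * ε ω j ∂μ = -(α * σ / σR) * v j) := by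
  have hmean (j : Fin d) : ∫ ω, Rtilde ω * ε ω j ∂μ = -σ * v j := by
    have hreward : ∀ ω, Rtilde ω = centeredQuadraticReward σ v Q (ε ω) + σξ * ξ ω := hRtilde
    simp_rw [hreward]
    exact integral_centeredQuadraticReward_add_noise_mul_eval σ v Q j
      ⟨hεmeas.aemeasurable, hεdist⟩ ⟨hξmeas.aemeasurable, hξdist⟩ hindep σξ
  exact ⟨hmean, fun j => by rw [hmean j]; ring⟩

/-- **Mean ES update on a quadratic landscape.**
With `ε` an i.i.d. standard Gaussian vector in `ℝ^d`, `ξ` a standard Gaussian scalar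
independent of `ε`, `Q` symmetric, `v = Q θ₀`, and centered observed reward
`R̃ = −σ (v·ε) − (σ²/2)(ε^⊤ Q ε − Tr Q) + σ_ξ ξ`, we have `E[R̃ ε] = −σ v`.
Consequently, with `σ_R = √(σ²‖v‖² + (σ⁴/2) Tr(Q²) + σ_ξ²) > 0` and step size `α > 0`,
the mean single-step ES update `E[Δθ] = (α/σ_R) E[R̃ ε]` equals `−(ασ/σ_R) v`. -/
theorem es_quadratic_landscape_mean_update
    {Ω : Type*} [MeasurableSpace Ω] (μ : Measure Ω) [IsProbabilityMeasure μ]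
    (d : ℕ) (Q : Matrix (Fin d) (Fin d) ℝ) (hQ : Q.IsSymm)
    (θ₀ v : Fin d → ℝ) (hv : v = Q.mulVec θ₀)
    (α σ σξ σR : ℝ) (hα : 0 < α) (hσ : 0 < σ) (hσξ : 0 ≤ σξ)
    (hσR : σR = Real.sqrt (σ ^ 2 * (∑ j, v j ^ 2)
        + σ ^ 4 / 2 * Matrix.trace (Q * Q) + σξ ^ 2))
    (hσRpos : 0 < σR)
    (ε : Ω → (Fin d → ℝ)) (ξ : Ω → ℝ)
    (hεmeas : Measurable ε) (hξmeas : Measurable ξ)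
    (hεdist : Measure.map ε μ = Measure.pi (fun _ : Fin d => gaussianReal 0 1))
    (hξdist : Measure.map ξ μ = gaussianReal 0 1)
    (hindep : IndepFun ε ξ μ)
    (Rtilde : Ω → ℝ)
    (hRtilde : ∀ ω, Rtilde ω = -σ * (∑ j, v j * ε ω j)
        - σ ^ 2 / 2 * ((∑ a, ∑ b, Q a b * ε ω a * ε ω b) - Matrix.trace Q)
        + σξ * ξ ω) :
    (∀ j, ∫ ω, Rtilde ω * ε ω j ∂μ = -σ * v j) ∧
    (∀ j, (α / σR) * ∫ ω, Rtilde ω * ε ω j ∂μ = -(α * σ / σR) * v j) :=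
  es_quadratic_landscape_mean_update_general μ d Q v α σ σξ σR ε ξ hεmeas hξmeas hεdist hξdist
    hindep Rtilde hRtilde
end
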